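/- With H_J defined recursively from {L_J} via H_∅ := E, H_J := (I − Σ_{J'⊂J} H_{J'}) ∘ L_J: if {H_J} satisfies Relevance (P2), then {L_J} satisfies (P2)*: whenever ∂g/∂x_J = 0, also ∂(L_J(g))/∂x_J = 0. -/

import Mathlib

open Finset MeasureTheory

variable {ι : Type*} [DecidableEq ι] {X : ι → Type*}

/-- Substitute the values `a i` into the coordinates `i ∈ J` of the point `x`. -/
def substPt (J : Finset ι) (a x : ∀ i, X i) : ∀ i, X i :=
  fun i => if i ∈ J then a i else x i

/-- The substitution operator `g ↦ g |_{x_J = a_J}`. -/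
def substOp (J : Finset ι) (a : ∀ i, X i) (g : (∀ i, X i) → ℝ) : (∀ i, X i) → ℝ :=
  fun x => g (substPt J a x)

/-- The partial difference operator `ⱼΔ_{a_j} g = g - g|_{x_j = a_j}`. -/
def deltaOp (j : ι) (a : ∀ i, X i) (g : (∀ i, X i) → ℝ) : (∀ i, X i) → ℝ :=
  g - substOp {j} a g

/-- The composed partial difference operator `_JΔ_{a_J}`, in its
inclusion-exclusion form `∑_{K ⊆ J} (-1)^|K| g|_{x_K = a_K}`. -/
def pdiff (J : Finset ι) (a : ∀ i, X i) (g : (∀ i, X i) → ℝ) : (∀ i, X i) → ℝ :=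
  ∑ K ∈ J.powerset, ((-1 : ℝ) ^ K.card) • substOp K a g

/-- `∂g/∂x_J = 0` : all composed partial differences over `J` vanish. -/
def PDiffZero (J : Finset ι) (g : (∀ i, X i) → ℝ) : Prop :=
  ∀ a : ∀ i, X i, pdiff J a g = 0

/-- `g ∈ V_K` : `g` depends only on the coordinates in `K`. -/
def DependsOnCoords (K : Finset ι) (g : (∀ i, X i) → ℝ) : Prop :=
  ∀ x y : ∀ i, X i, (∀ i ∈ K, x i = y i) → g x = g y


set_option linter.unusedSectionVars false in
lemma dependsOn_mono' {K K' : Finset ι} (h : K ⊆ K') {f : (∀ i, X i) → ℝ}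
    (hd : DependsOnCoords K f) : DependsOnCoords K' f :=
  fun x y hxy => hd x y (fun i hi => hxy i (h hi))

set_option linter.unusedSectionVars false in
lemma dependsOn_sub' {K : Finset ι} {f g : (∀ i, X i) → ℝ}
    (hf : DependsOnCoords K f) (hg : DependsOnCoords K g) : DependsOnCoords K (f - g) :=
  fun x y hxy => by simp [Pi.sub_apply, hf x y hxy, hg x y hxy]

set_option linter.unusedSectionVars false in
lemma dependsOn_sum' {K : Finset ι} {α : Type*} {s : Finset α} {f : α → (∀ i, X i) → ℝ}
    (hf : ∀ j ∈ s, DependsOnCoords K (f j)) : DependsOnCoords K (∑ j ∈ s, f j) := by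
  intro x y hxy
  simp only [Finset.sum_apply]
  exact Finset.sum_congr rfl (fun j hj => hf j hj x y hxy)

lemma pdiff_sum' {J : Finset ι} {a : ∀ i, X i} {α : Type*} {s : Finset α}
    {f : α → (∀ i, X i) → ℝ} :
    pdiff J a (∑ j ∈ s, f j) = ∑ j ∈ s, pdiff J a (f j) := by
  funext x
  simp only [pdiff, substOp, Finset.sum_apply, Pi.smul_apply, smul_eq_mul,
    Finset.mul_sum]
  rw [Finset.sum_comm]

lemma pdiff_zero_of_dependsOn' {J K : Finset ι} {j : ι} (hjJ : j ∈ J) (hjK : j ∉ K)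
    {f : (∀ i, X i) → ℝ} (hf : DependsOnCoords K f) (a : ∀ i, X i) :
    pdiff J a f = 0 := by
  have hJ : J = insert j (J.erase j) := (Finset.insert_erase hjJ).symm
  rw [pdiff, hJ, Finset.sum_powerset_insert (Finset.notMem_erase j J)]
  have : ∀ t ∈ (J.erase j).powerset,
      ((-1 : ℝ) ^ (insert j t).card) • substOp (insert j t) a f
        = -(((-1 : ℝ) ^ t.card) • substOp t a f) := by
    intro t ht
    have hjt : j ∉ t := fun h => Finset.notMem_erase j J (Finset.mem_powerset.1 ht h)
    have hcard : (insert j t).card = t.card + 1 := Finset.card_insert_of_notMem hjt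
    have hsub : substOp (insert j t) a f = substOp t a f := by
      funext x
      refine hf _ _ (fun i hi => ?_)
      have hij : i ≠ j := fun h => hjK (h ▸ hi)
      simp [substPt, Finset.mem_insert, hij]
    rw [hsub, hcard, pow_succ, mul_neg_one, neg_smul]
  rw [Finset.sum_congr rfl this, Finset.sum_neg_distrib, add_neg_cancel]

/-- if the recursively defined `{H_J}` satisfies Relevance (P2),
then `{L_J}` satisfies (P2)*. -/
theorem stmt9
    (E : ((∀ i, X i) → ℝ) →ₗ[ℝ] ((∀ i, X i) → ℝ))
    (hEconst : ∀ g : (∀ i, X i) → ℝ, DependsOnCoords (∅ : Finset ι) (E g))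
    (hEfix : ∀ c : ℝ, E (fun _ => c) = fun _ => c)
    (L : Finset ι → ((∀ i, X i) → ℝ) →ₗ[ℝ] ((∀ i, X i) → ℝ))
    (hL : ∀ J : Finset ι, J.Nonempty → ∀ g : (∀ i, X i) → ℝ, DependsOnCoords J (L J g))
    (H : Finset ι → ((∀ i, X i) → ℝ) →ₗ[ℝ] ((∀ i, X i) → ℝ))
    (hH0 : H ∅ = E)
    (hHrec : ∀ J : Finset ι, J.Nonempty → ∀ g : (∀ i, X i) → ℝ,
      H J g = L J g - ∑ J' ∈ J.powerset.erase J, H J' (L J g))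
    (hP2 : ∀ (J : Finset ι) (g : (∀ i, X i) → ℝ), PDiffZero J g → H J g = 0) :
    ∀ J : Finset ι, J.Nonempty → ∀ g : (∀ i, X i) → ℝ,
      PDiffZero J g → PDiffZero J (L J g) := by

  -- Step 1: every `H K f` depends only on the coordinates in `K`.
  have hHdep : ∀ K : Finset ι, ∀ f : (∀ i, X i) → ℝ, DependsOnCoords K (H K f) := by
    intro K
    induction K using Finset.strongInduction with
    | _ K ih =>
      intro f
      rcases K.eq_empty_or_nonempty with rfl | hK
      · rw [hH0]; exact hEconst f
      · rw [hHrec K hK f]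
        refine dependsOn_sub' (hL K hK f) (dependsOn_sum' ?_)
        intro J' hJ'
        rw [Finset.mem_erase, Finset.mem_powerset] at hJ'
        exact dependsOn_mono' hJ'.2 (ih J' (lt_of_le_of_ne hJ'.2 hJ'.1) (L K f))
  intro J hJ g hg a
  -- Step 2: `H J g = 0`, so `L J g` is the sum of the lower-order terms.
  have hLg : L J g = ∑ J' ∈ J.powerset.erase J, H J' (L J g) := by
    have h0 := hHrec J hJ g
    rw [hP2 J g hg] at h0
    exact sub_eq_zero.mp h0.symm
  rw [hLg, pdiff_sum']
  refine Finset.sum_eq_zero (fun J' hJ' => ?_)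
  rw [Finset.mem_erase, Finset.mem_powerset] at hJ'
  obtain ⟨j, hjJ, hjJ'⟩ := Finset.exists_of_ssubset (lt_of_le_of_ne hJ'.2 hJ'.1)
  exact pdiff_zero_of_dependsOn' hjJ hjJ' (hHdep J' (L J g)) a
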